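/- arXiv:2006.00516 — 2 statements merged into one kernel-verified Lean document; each statement's English description precedes it below -/
import Mathlib

section
/- Let n ≥ 2, let p ∈ (0,1), and let k be an integer with 1 ≤ k ≤ n satisfying k ≥ 1 + (n−1)p. Set i = ⌈ n·p·( k − 1 − (n−1)p ) / ( k − n·p ) ⌉. Then the maximum of P_θ(∑_{i=1}^n c_i ≥ k) over all pairwise independent distributions θ with all marginal probabilities equal to p equals ( (i−1)(i − 2·n·p) + n(n−1)p^2 ) / ( (k−i)^2 + (k−i) ), and this maximum is attained by some such distribution θ. -/
open Finset

noncomputable section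

/-- Probability that at least `k` of the `n` coordinates equal `1` under the pmf `θ` on `{0,1}^n`. -/
def probGE (n : ℕ) (θ : (Fin n → Bool) → ℝ) (k : ℕ) : ℝ :=
  ∑ c ∈ Finset.univ.filter
      (fun c : Fin n → Bool => k ≤ (Finset.univ.filter (fun i => c i = true)).card), θ c

/-- Probability that all `n` coordinates equal `1` under the pmf `θ` on `{0,1}^n`. -/
def probAll (n : ℕ) (θ : (Fin n → Bool) → ℝ) : ℝ :=
  ∑ c ∈ Finset.univ.filter (fun c : Fin n → Bool => ∀ i, c i = true), θ c

/-- `θ` is a probability mass function on `{0,1}^n`. -/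
def IsDist (n : ℕ) (θ : (Fin n → Bool) → ℝ) : Prop :=
  (∀ c, 0 ≤ θ c) ∧ (∑ c, θ c = 1)

/-- Univariate marginal probability `P_θ(c_i = 1)`. -/
def Marg (n : ℕ) (θ : (Fin n → Bool) → ℝ) (i : Fin n) : ℝ :=
  ∑ c ∈ Finset.univ.filter (fun c : Fin n → Bool => c i = true), θ c

/-- Bivariate probability `P_θ(c_i = 1, c_j = 1)`. -/
def Biv (n : ℕ) (θ : (Fin n → Bool) → ℝ) (i j : Fin n) : ℝ :=
  ∑ c ∈ Finset.univ.filter (fun c : Fin n → Bool => c i = true ∧ c j = true), θ c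

/-- `θ` is a pairwise independent distribution with marginal vector `p`. -/
def PairwiseIndep (n : ℕ) (p : Fin n → ℝ) (θ : (Fin n → Bool) → ℝ) : Prop :=
  IsDist n θ ∧ (∀ i, Marg n θ i = p i) ∧
    (∀ i j : Fin n, i < j → Biv n θ i j = p i * p j)


/-!
Write `S` for the number of ones. Pairwise independence fixes `E[S] = n p` and
`E[S (S - 1)] = n (n - 1) p²`, hence `E[(S - a)(S - a + 1)]` for every `a`. For an integer
`a < k` the polynomial `(s - a)(s - a + 1)` is nonnegative on the integers and at least
`(k - a)(k - a + 1)` on `{s ≥ k}`, so Markov's inequality bounds `P(S ≥ k)`. For `a = i` the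
bound is attained by an exchangeable distribution that puts `S` on the three levels `i - 1`, `i`,
`k`: the weights are forced by the two moment conditions, and the ceiling in the definition of
`i` is exactly what makes the first two nonnegative.
-/

variable {n : ℕ}

def numOnes (c : Fin n → Bool) : ℕ := #{i | c i = true}

theorem sum_marg_eq_sum_mul_numOnes (θ : (Fin n → Bool) → ℝ) :
    ∑ i, Marg n θ i = ∑ c, θ c * numOnes c := by
  simp_rw [Marg, sum_filter]
  rw [sum_comm]
  refine sum_congr rfl fun c _ => ?_
  rw [← sum_filter, sum_const, nsmul_eq_mul, mul_comm, numOnes]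

theorem sum_offDiag_biv_eq_sum_mul_numOnes (θ : (Fin n → Bool) → ℝ) :
    ∑ x ∈ univ.offDiag, Biv n θ x.1 x.2 = ∑ c, θ c * (numOnes c * (numOnes c - 1)) := by
  simp_rw [Biv, sum_filter]
  rw [sum_comm]
  refine sum_congr rfl fun c _ => ?_
  have hpairs : {x ∈ (univ : Finset (Fin n)).offDiag | c x.1 = true ∧ c x.2 = true} =
      (univ.filter fun i => c i = true).offDiag := by
    ext ⟨i, j⟩
    simp only [mem_filter, mem_offDiag, mem_univ, true_and]
    tauto
  rw [← sum_filter, hpairs, sum_const, nsmul_eq_mul, offDiag_card, ← numOnes,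
    Nat.cast_sub (Nat.le_mul_self _)]
  push_cast
  ring

theorem card_offDiag_univ : ((univ : Finset (Fin n)).offDiag.card : ℝ) = n * (n - 1) := by
  rw [offDiag_card, card_univ, Fintype.card_fin, Nat.cast_sub (Nat.le_mul_self _)]
  push_cast
  ring

section PairwiseIndep

variable {p : ℝ} {θ : (Fin n → Bool) → ℝ}

theorem PairwiseIndep.sum_mul_numOnes (hθ : PairwiseIndep n (fun _ => p) θ) :
    ∑ c, θ c * numOnes c = n * p := by
  rw [← sum_marg_eq_sum_mul_numOnes, sum_congr rfl fun i _ => hθ.2.1 i]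
  simp

theorem PairwiseIndep.sum_mul_numOnes_mul_pred (hθ : PairwiseIndep n (fun _ => p) θ) :
    ∑ c, θ c * (numOnes c * (numOnes c - 1)) = n * (n - 1) * p ^ 2 := by
  have hbiv : ∀ x ∈ (univ : Finset (Fin n)).offDiag, Biv n θ x.1 x.2 = p ^ 2 := by
    rintro ⟨i, j⟩ hij
    rcases lt_or_gt_of_ne (mem_offDiag.1 hij).2.2 with h | h
    · rw [hθ.2.2 i j h, sq]
    · rw [Biv, filter_congr fun c _ => and_comm, ← Biv, hθ.2.2 j i h, sq]
  rw [← sum_offDiag_biv_eq_sum_mul_numOnes, sum_congr rfl hbiv, sum_const, nsmul_eq_mul,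
    card_offDiag_univ]

theorem PairwiseIndep.sum_mul_quadratic (hθ : PairwiseIndep n (fun _ => p) θ) (a : ℝ) :
    ∑ c, θ c * ((numOnes c - a) * (numOnes c - a + 1)) =
      (a - 1) * (a - 2 * n * p) + n * (n - 1) * p ^ 2 := by
  have hexpand : ∀ c, θ c * ((numOnes c - a) * (numOnes c - a + 1)) =
      θ c * (numOnes c * (numOnes c - 1)) + (2 - 2 * a) * (θ c * numOnes c) + (a ^ 2 - a) * θ c :=
    fun c => by ring
  rw [sum_congr rfl fun c _ => hexpand c, sum_add_distrib, sum_add_distrib, ← mul_sum, ← mul_sum,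
    hθ.sum_mul_numOnes_mul_pred, hθ.sum_mul_numOnes, hθ.1.2]
  ring

end PairwiseIndep

def bernoulliProd (n : ℕ) (p : ℝ) (c : Fin n → Bool) : ℝ := ∏ i, if c i then p else 1 - p

/-- Zeroing the `false` branch of the factors indexed by `T` cuts the sum down to the `c` that
are `true` on `T`; expanding the product of sums then gives `∏ i, (p if i ∈ T else 1)`. -/
theorem sum_bernoulliProd_filter (p : ℝ) (T : Finset (Fin n)) :
    ∑ c ∈ univ.filter (fun c : Fin n → Bool => ∀ i ∈ T, c i = true), bernoulliProd n p c =
      p ^ #T := by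
  classical
  have hfactor : ∀ c : Fin n → Bool,
      (if ∀ i ∈ T, c i = true then bernoulliProd n p c else 0) =
        ∏ i, if i ∈ T then (if c i then p else 0) else (if c i then p else 1 - p) := by
    intro c
    by_cases hc : ∀ i ∈ T, c i = true
    · rw [if_pos hc, bernoulliProd]
      exact prod_congr rfl fun i _ => by by_cases hi : i ∈ T <;> simp [hi, hc]
    · rw [if_neg hc, eq_comm]
      obtain ⟨i, hi, hci⟩ : ∃ i ∈ T, c i = false := by simpa using hc
      exact prod_eq_zero (mem_univ i) (by simp [hi, hci])
  rw [sum_filter, sum_congr rfl fun c _ => hfactor c, ← Fintype.prod_sum fun i (b : Bool) =>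
    if i ∈ T then (if b then p else 0) else (if b then p else 1 - p)]
  have hsum : ∀ i, (∑ b : Bool, if i ∈ T then (if b then p else 0) else (if b then p else 1 - p)) =
      if i ∈ T then p else 1 := fun i => by by_cases hi : i ∈ T <;> simp [hi]
  rw [prod_congr rfl fun i _ => hsum i, prod_ite_mem, univ_inter, prod_const]

theorem pairwiseIndep_bernoulliProd {p : ℝ} (hp0 : 0 ≤ p) (hp1 : p ≤ 1) :
    PairwiseIndep n (fun _ => p) (bernoulliProd n p) := by
  classical
  refine ⟨⟨fun c => prod_nonneg fun i _ => ?_, ?_⟩, fun i => ?_, fun i j hij => ?_⟩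
  · split <;> linarith
  · simpa using sum_bernoulliProd_filter p ∅
  · simpa [Marg] using sum_bernoulliProd_filter p {i}
  · have := sum_bernoulliProd_filter p {i, j}
    rw [card_pair hij.ne, sq] at this
    simpa [Biv] using this

theorem int_mul_add_one_nonneg (x : ℤ) : 0 ≤ x * (x + 1) := by
  rcases le_or_gt 0 x with h | h <;> nlinarith

/-- Under the product measure the left side is `E[(S - a)(S - a + 1)]` for a binomial `S`, and
`(s - a)(s - a + 1)` is a product of consecutive integers. -/
theorem quadratic_moment_nonneg {p : ℝ} (hp0 : 0 ≤ p) (hp1 : p ≤ 1) (a : ℤ) :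
    0 ≤ ((a : ℝ) - 1) * (a - 2 * n * p) + n * (n - 1) * p ^ 2 := by
  have hθ := pairwiseIndep_bernoulliProd (n := n) hp0 hp1
  rw [← hθ.sum_mul_quadratic]
  refine sum_nonneg fun c _ => mul_nonneg (hθ.1.1 c) ?_
  exact_mod_cast int_mul_add_one_nonneg (numOnes c - a)

/-- The bound of the theorem, `E[(S - a)(S - a + 1)] / ((k - a)(k - a + 1))`. -/
def tailBound (n k : ℕ) (p a : ℝ) : ℝ :=
  ((a - 1) * (a - 2 * n * p) + n * (n - 1) * p ^ 2) / ((k - a) ^ 2 + (k - a))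

/-- Markov's inequality for `(S - a)(S - a + 1)`, which is nonnegative on the integers and at
least `(k - a)(k - a + 1)` on `{S ≥ k}`. -/
theorem indicator_le_quadratic {k s : ℕ} {a : ℤ} (hak : a < k) :
    (if k ≤ s then 1 else 0 : ℝ) ≤
      ((s - a) * (s - a + 1) : ℝ) / ((k - a) ^ 2 + (k - a)) := by
  have hak' : (a : ℝ) + 1 ≤ k := by exact_mod_cast hak
  have hden : (0 : ℝ) < (k - a) ^ 2 + (k - a) := by nlinarith
  split_ifs with hks
  · have hks' : (k : ℝ) ≤ s := by exact_mod_cast hks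
    rw [le_div_iff₀ hden]
    nlinarith
  · exact div_nonneg (by exact_mod_cast int_mul_add_one_nonneg (s - a)) hden.le

theorem PairwiseIndep.probGE_le_tailBound {p : ℝ} {θ : (Fin n → Bool) → ℝ}
    (hθ : PairwiseIndep n (fun _ => p) θ) {k : ℕ} {a : ℤ} (hak : a < k) :
    probGE n θ k ≤ tailBound n k p a := by
  calc probGE n θ k = ∑ c, θ c * (if k ≤ numOnes c then 1 else 0) := by
        rw [probGE, sum_filter]
        exact sum_congr rfl fun c _ => (mul_boole _ _).symm
    _ ≤ ∑ c, θ c * (((numOnes c - a) * (numOnes c - a + 1) : ℝ) / ((k - a) ^ 2 + (k - a))) :=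
        sum_le_sum fun c _ => mul_le_mul_of_nonneg_left (indicator_le_quadratic hak) (hθ.1.1 c)
    _ = tailBound n k p a := by
        simp only [← mul_div_assoc, ← sum_div, hθ.sum_mul_quadratic, tailBound]

theorem numOnes_le (c : Fin n → Bool) : numOnes c ≤ n :=
  (card_filter_le _ _).trans (card_fin n).le

theorem numOnes_comp_perm (c : Fin n → Bool) (σ : Equiv.Perm (Fin n)) :
    numOnes (c ∘ σ) = numOnes c :=
  card_equiv σ fun i => by simp

theorem sum_comp_perm (σ : Equiv.Perm (Fin n)) (f : (Fin n → Bool) → ℝ) :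
    ∑ c, f (c ∘ σ) = ∑ c, f c :=
  Fintype.sum_equiv (σ.symm.arrowCongr (Equiv.refl Bool)) _ _ fun _ => rfl

theorem exists_perm_apply_pair {i j i' j' : Fin n} (hij : i ≠ j) (hij' : i' ≠ j') :
    ∃ σ : Equiv.Perm (Fin n), σ i = i' ∧ σ j = j' := by
  set τ := Equiv.swap i i'
  have hτj : τ j ≠ i' := fun h => hij (τ.injective (h.trans (Equiv.swap_apply_left i i').symm)).symm
  refine ⟨τ.trans (Equiv.swap (τ j) j'), ?_, Equiv.swap_apply_left _ _⟩
  simp only [Equiv.trans_apply, τ, Equiv.swap_apply_left]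
  exact Equiv.swap_apply_of_ne_of_ne hτj.symm hij'

def Exchangeable (θ : (Fin n → Bool) → ℝ) : Prop :=
  ∀ (σ : Equiv.Perm (Fin n)) (c : Fin n → Bool), θ (c ∘ σ) = θ c

section Exchangeable

variable {θ : (Fin n → Bool) → ℝ}

theorem Exchangeable.marg_apply (hθ : Exchangeable θ) (σ : Equiv.Perm (Fin n)) (i : Fin n) :
    Marg n θ (σ i) = Marg n θ i := by
  simp only [Marg, sum_filter]
  conv_rhs => rw [← sum_comp_perm σ]
  simp [hθ σ]

theorem Exchangeable.biv_apply (hθ : Exchangeable θ) (σ : Equiv.Perm (Fin n)) (i j : Fin n) :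
    Biv n θ (σ i) (σ j) = Biv n θ i j := by
  simp only [Biv, sum_filter]
  conv_rhs => rw [← sum_comp_perm σ]
  simp [hθ σ]

theorem Exchangeable.marg_eq (hθ : Exchangeable θ) (i : Fin n) :
    Marg n θ i = (∑ c, θ c * numOnes c) / n := by
  have hn : (n : ℝ) ≠ 0 := by exact_mod_cast (Fin.pos i).ne'
  have hconst : ∀ i', Marg n θ i' = Marg n θ i := fun i' => by
    simpa using hθ.marg_apply (Equiv.swap i i') i
  rw [eq_div_iff hn, ← sum_marg_eq_sum_mul_numOnes, sum_congr rfl fun i' _ => hconst i']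
  simp [mul_comm]

theorem Exchangeable.biv_eq (hθ : Exchangeable θ) {i j : Fin n} (hij : i ≠ j) :
    Biv n θ i j = (∑ c, θ c * (numOnes c * (numOnes c - 1))) / (n * (n - 1)) := by
  have hn : (2 : ℝ) ≤ n := by exact_mod_cast (by omega : 2 ≤ n)
  have hconst : ∀ x ∈ (univ : Finset (Fin n)).offDiag, Biv n θ x.1 x.2 = Biv n θ i j := by
    rintro ⟨i', j'⟩ hx
    obtain ⟨σ, hσi, hσj⟩ := exists_perm_apply_pair hij (mem_offDiag.1 hx).2.2
    simpa [hσi, hσj] using hθ.biv_apply σ i j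
  rw [eq_div_iff (by nlinarith), ← sum_offDiag_biv_eq_sum_mul_numOnes, sum_congr rfl hconst,
    sum_const, nsmul_eq_mul, card_offDiag_univ, mul_comm]

end Exchangeable

section LevelDist

def sliceCard (n m : ℕ) : ℕ := #{c : Fin n → Bool | numOnes c = m}

theorem sliceCard_pos {m : ℕ} (hm : m ≤ n) : 0 < sliceCard n m :=
  card_pos.2 ⟨fun i => decide ((i : ℕ) < m),
    mem_filter.2 ⟨mem_univ _, by simp [numOnes, Fin.card_filter_val_lt, hm]⟩⟩

/-- The exchangeable distribution under which the number of ones has law `q`. -/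
def levelDist (n : ℕ) (q : ℕ → ℝ) (c : Fin n → Bool) : ℝ :=
  q (numOnes c) / sliceCard n (numOnes c)

variable {q : ℕ → ℝ}

theorem exchangeable_levelDist : Exchangeable (levelDist n q) := fun σ c => by
  simp only [levelDist, numOnes_comp_perm]

theorem sum_levelDist_mul (F : ℕ → ℝ) :
    ∑ c, levelDist n q c * F (numOnes c) = ∑ m ∈ range (n + 1), q m * F m := by
  rw [← sum_fiberwise_of_maps_to (t := range (n + 1))
    fun c _ => mem_range.2 (Nat.lt_succ_of_le (numOnes_le c))]
  refine sum_congr rfl fun m hm => ?_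
  have hslice : ∀ c ∈ univ.filter (numOnes · = m),
      levelDist n q c * F (numOnes c) = q m / sliceCard n m * F m := fun c hc => by
    rw [levelDist, (mem_filter.1 hc).2]
  have hpos : (0 : ℝ) < sliceCard n m := by
    exact_mod_cast sliceCard_pos (Nat.lt_succ_iff.1 (mem_range.1 hm))
  rw [sum_congr rfl hslice, sum_const, nsmul_eq_mul, ← sliceCard]
  field_simp

theorem pairwiseIndep_levelDist {p : ℝ} (hq : ∀ m, 0 ≤ q m)
    (h0 : ∑ m ∈ range (n + 1), q m = 1)
    (h1 : ∑ m ∈ range (n + 1), q m * m = n * p)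
    (h2 : ∑ m ∈ range (n + 1), q m * (m * (m - 1)) = n * (n - 1) * p ^ 2) :
    PairwiseIndep n (fun _ => p) (levelDist n q) := by
  refine ⟨⟨fun c => div_nonneg (hq _) (Nat.cast_nonneg _), ?_⟩, fun i => ?_, fun i j hij => ?_⟩
  · simpa [h0] using sum_levelDist_mul (n := n) (q := q) fun _ => 1
  · have hn : (n : ℝ) ≠ 0 := by exact_mod_cast (Fin.pos i).ne'
    rw [exchangeable_levelDist.marg_eq, sum_levelDist_mul (fun m => (m : ℝ)), h1]
    field_simp
  · have hn : (2 : ℝ) ≤ n := by exact_mod_cast (by omega : 2 ≤ n)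
    have hn1 : (n : ℝ) - 1 ≠ 0 := by linarith
    rw [exchangeable_levelDist.biv_eq hij.ne, sum_levelDist_mul (fun m => (m * (m - 1) : ℝ)), h2]
    field_simp

theorem probGE_levelDist (k : ℕ) :
    probGE n (levelDist n q) k = ∑ m ∈ range (n + 1), q m * if k ≤ m then 1 else 0 := by
  rw [← sum_levelDist_mul, probGE, sum_filter]
  exact sum_congr rfl fun c _ => (mul_boole _ _).symm

end LevelDist

theorem exists_pairwiseIndep_three_levels {k j : ℕ} {p w₁ w₂ w₃ : ℝ} (hjk : j < k) (hkn : k ≤ n)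
    (hw₁ : 0 ≤ w₁) (hw₂ : 0 ≤ w₂) (hw₃ : 0 ≤ w₃) (hj : j = 0 → w₁ = 0)
    (h0 : w₁ + w₂ + w₃ = 1)
    (h1 : w₁ * (j - 1) + w₂ * j + w₃ * k = n * p)
    (h2 : w₁ * ((j - 1) * (j - 2)) + w₂ * (j * (j - 1)) + w₃ * (k * (k - 1)) =
      n * (n - 1) * p ^ 2) :
    ∃ θ, PairwiseIndep n (fun _ => p) θ ∧ probGE n θ k = w₃ := by
  set q : ℕ → ℝ := fun m =>
    (if m = j - 1 then w₁ else 0) + (if m = j then w₂ else 0) + (if m = k then w₃ else 0)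
  have hsum : ∀ F : ℕ → ℝ,
      ∑ m ∈ range (n + 1), q m * F m = w₁ * F (j - 1) + w₂ * F j + w₃ * F k := fun F => by
    simp only [q, add_mul, ite_mul, zero_mul, sum_add_distrib, sum_ite_eq', mem_range]
    rw [if_pos (by omega), if_pos (by omega), if_pos (by omega)]
  -- `j - 1` truncates at `j = 0`, where the weight `w₁` vanishes
  have hlevel : ∀ F : ℝ → ℝ, w₁ * F ((j - 1 : ℕ) : ℝ) = w₁ * F (j - 1) := fun F => by
    rcases Nat.eq_zero_or_pos j with hj0 | hj0
    · simp [hj hj0]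
    · rw [Nat.cast_sub hj0, Nat.cast_one]
  refine ⟨levelDist n q, pairwiseIndep_levelDist (fun m => ?_) ?_ ?_ ?_, ?_⟩
  · simp only [q]
    split_ifs <;> linarith
  · simpa [h0] using hsum fun _ => 1
  · have h := hlevel fun x => x
    rw [hsum]
    linear_combination h1 + h
  · have h := hlevel fun x => x * (x - 1)
    rw [hsum]
    linear_combination h2 + h
  · rw [probGE_levelDist, hsum]
    simp [show ¬ k ≤ j - 1 by omega, show ¬ k ≤ j by omega]

theorem exists_pairwiseIndep_probGE_eq_tailBound {k j : ℕ} {p r : ℝ} (hkn : k ≤ n) (hjk : j < k)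
    (hD : n * p < k) (hN : 0 ≤ ((j : ℝ) - 1) * (j - 2 * n * p) + n * (n - 1) * p ^ 2)
    (hr : r = n * p * (k - 1 - (n - 1) * p) / (k - n * p)) (hr0 : 0 ≤ r) (hrj : r ≤ j)
    (hjr : j ≤ r + 1) :
    ∃ θ, PairwiseIndep n (fun _ => p) θ ∧ probGE n θ k = tailBound n k p j := by
  have hjk' : (j : ℝ) + 1 ≤ k := by exact_mod_cast hjk
  have hD' : (k : ℝ) - n * p ≠ 0 := by linarith
  have hkj : (k : ℝ) - j ≠ 0 := by linarith
  have hkj1 : (k : ℝ) - j + 1 ≠ 0 := by linarith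
  have hden : (k - j : ℝ) ^ 2 + (k - j) ≠ 0 := by nlinarith
  -- Lagrange interpolation at the levels `j - 1, j, k`: for instance
  -- `w₁ = E[(S - j)(S - k)] / (k - j + 1)`, and `E[(S - j)(S - k)] = (k - n p)(j - r)`.
  refine exists_pairwiseIndep_three_levels (w₁ := (k - n * p) * (j - r) / (k - j + 1))
    (w₂ := (k - n * p) * (r + 1 - j) / (k - j)) hjk hkn ?_ ?_ (div_nonneg hN (by nlinarith))
    (fun hj => ?_) ?_ ?_ ?_
  · exact div_nonneg (mul_nonneg (by linarith) (by linarith)) (by linarith)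
  · exact div_nonneg (mul_nonneg (by linarith) (by linarith)) (by linarith)
  · rw [show r = 0 by subst hj; push_cast at hrj; linarith, hj]
    simp
  all_goals
    rw [tailBound, hr]
    field_simp
    ring

theorem stmt_13_general (n k : ℕ) (hkn : k ≤ n)
    (p : ℝ) (hp0 : 0 < p) (hp1 : p < 1)
    (hk' : 1 + ((n : ℝ) - 1) * p ≤ (k : ℝ))
    (ic : ℤ)
    (hic : ic = ⌈(n : ℝ) * p * ((k : ℝ) - 1 - ((n : ℝ) - 1) * p) / ((k : ℝ) - (n : ℝ) * p)⌉) :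
    IsGreatest
      {x : ℝ | ∃ θ : (Fin n → Bool) → ℝ,
        PairwiseIndep n (fun _ => p) θ ∧ probGE n θ k = x}
      ((((ic : ℝ) - 1) * ((ic : ℝ) - 2 * (n : ℝ) * p) + (n : ℝ) * ((n : ℝ) - 1) * p ^ 2) /
        (((k : ℝ) - ic) ^ 2 + ((k : ℝ) - ic))) := by
  have hD : (n : ℝ) * p < k := by linarith
  set r := (n : ℝ) * p * ((k : ℝ) - 1 - ((n : ℝ) - 1) * p) / ((k : ℝ) - (n : ℝ) * p) with hr
  have hr0 : 0 ≤ r := div_nonneg (mul_nonneg (by positivity) (by linarith)) (by linarith)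
  -- `(k - n p) (k - 1 - r)` is the quadratic moment at `a = k`
  have hrk : r ≤ k - 1 := by
    have hNk := quadratic_moment_nonneg (n := n) hp0.le hp1.le k
    push_cast at hNk
    rw [hr, div_le_iff₀ (by linarith)]
    linarith
  obtain ⟨j, rfl⟩ : ∃ j : ℕ, ic = j :=
    ⟨ic.toNat, (Int.toNat_of_nonneg (hic ▸ Int.ceil_nonneg hr0)).symm⟩
  have hjk : j < k := by
    have : (j : ℤ) ≤ k - 1 := hic ▸ Int.ceil_le.2 (by push_cast; exact hrk)
    omega
  push_cast
  refine ⟨?_, ?_⟩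
  · exact exists_pairwiseIndep_probGE_eq_tailBound hkn hjk hD
      (by exact_mod_cast quadratic_moment_nonneg (n := n) hp0.le hp1.le j) hr hr0
      (by exact_mod_cast hic ▸ Int.le_ceil r) (by exact_mod_cast (hic ▸ Int.ceil_lt_add_one r).le)
  · rintro x ⟨θ, hθ, rfl⟩
    exact hθ.probGE_le_tailBound (a := j) (by omega)

theorem stmt_13 (n k : ℕ) (hn : 2 ≤ n) (hk1 : 1 ≤ k) (hkn : k ≤ n)
    (p : ℝ) (hp0 : 0 < p) (hp1 : p < 1)
    (hk' : 1 + ((n : ℝ) - 1) * p ≤ (k : ℝ))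
    (ic : ℤ)
    (hic : ic = ⌈(n : ℝ) * p * ((k : ℝ) - 1 - ((n : ℝ) - 1) * p) / ((k : ℝ) - (n : ℝ) * p)⌉) :
    IsGreatest
      {x : ℝ | ∃ θ : (Fin n → Bool) → ℝ,
        PairwiseIndep n (fun _ => p) θ ∧ probGE n θ k = x}
      ((((ic : ℝ) - 1) * ((ic : ℝ) - 2 * (n : ℝ) * p) + (n : ℝ) * ((n : ℝ) - 1) * p ^ 2) /
        (((k : ℝ) - ic) ^ 2 + ((k : ℝ) - ic))) :=
  stmt_13_general n k hkn p hp0 hp1 hk' ic hic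
end
end

section
/- Let n ≥ 3, let α be an integer with 1 ≤ α ≤ n−2, and set p = α/(n−1). Then: (i) the maximum of P_θ(∑_{i=1}^n c_i ≥ α+1) over all pairwise independent distributions θ with identical marginal probability p equals n·p / ( n·p + 1 − p ); and (ii) the maximum of P_θ(∑_{i=1}^n c_i ≥ n) over all such distributions equals p / ( p + n·(1−p) ). In both cases the maximum coincides with the one-sided Chebyshev bound n·p·(1−p) / ( n·p·(1−p) + (k − n·p)^2 ) at k = α+1 and k = n respectively. -/
open Finset

noncomputable section

/-!
Let `S = ∑ i, c i`. Pairwise independence fixes the first two moments of `S`: `E S = n p` and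
`E S² = n p + n (n - 1) p²`, so `Var S = n p (1 - p)`, and Cantelli's inequality bounds
`P(S ≥ k)` by the one-sided Chebyshev bound. For `p = α / (n - 1)` this bound is attained by
exchangeable distributions carried by two levels of the cube: the uniform distribution on the
vectors with exactly `m` ones has `P(c i = 1) = m / n` and `P(c i = c j = 1) = m (m - 1) / (n (n - 1))`,
and a mixture of the levels `α + 1` and `0` (for `k = α + 1`), resp. `n` and `α` (for `k = n`),
matches both moments.
-/

lemma sum_smul_add_smul {ι : Type*} (S : Finset ι) (a b : ℝ) (θ η : ι → ℝ) :
    ∑ c ∈ S, (a • θ + b • η) c = a * ∑ c ∈ S, θ c + b * ∑ c ∈ S, η c := by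
  simp [sum_add_distrib, mul_sum]

section Cantelli

variable {ι : Type*} [Fintype ι] {θ X : ι → ℝ}

lemma sum_filter_le_sum_mul_sq_div (hθ : ∀ c, 0 ≤ θ c) {a k : ℝ} (hak : a < k) :
    ∑ c ∈ univ.filter (fun c => k ≤ X c), θ c ≤ (∑ c, θ c * (X c - a) ^ 2) / (k - a) ^ 2 := by
  have hka : 0 < (k - a) ^ 2 := by nlinarith
  rw [sum_div]
  calc ∑ c ∈ univ.filter (fun c => k ≤ X c), θ c
      ≤ ∑ c ∈ univ.filter (fun c => k ≤ X c), θ c * (X c - a) ^ 2 / (k - a) ^ 2 := by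
        refine sum_le_sum fun c hc => ?_
        have hXc : k ≤ X c := (mem_filter.mp hc).2
        rw [mul_div_assoc]
        refine le_mul_of_one_le_right (hθ c) ((one_le_div hka).mpr ?_)
        nlinarith
    _ ≤ ∑ c, θ c * (X c - a) ^ 2 / (k - a) ^ 2 :=
        sum_le_sum_of_subset_of_nonneg (filter_subset _ _) fun c _ _ => by
          have := hθ c; positivity

lemma sum_filter_le_cantelli (hθ : ∀ c, 0 ≤ θ c) (hθ₁ : ∑ c, θ c = 1) {μ k : ℝ}
    (hμ : ∑ c, θ c * X c = μ) (hk : μ < k) :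
    ∑ c ∈ univ.filter (fun c => k ≤ X c), θ c ≤
      (∑ c, θ c * (X c - μ) ^ 2) / ((∑ c, θ c * (X c - μ) ^ 2) + (k - μ) ^ 2) := by
  set v := ∑ c, θ c * (X c - μ) ^ 2
  have hv : 0 ≤ v := sum_nonneg fun c _ => by have := hθ c; positivity
  have hd : 0 < k - μ := sub_pos.mpr hk
  -- the shift in Markov's inequality for `(X - a)²` that minimises the resulting bound
  set a := μ - v / (k - μ)
  have hak : a < k := by
    have : 0 ≤ v / (k - μ) := by positivity
    linarith
  have hshift : ∑ c, θ c * (X c - a) ^ 2 = v + (μ - a) ^ 2 := by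
    have hexpand (c : ι) : θ c * (X c - a) ^ 2 =
        θ c * (X c - μ) ^ 2 + 2 * (μ - a) * (θ c * X c) - 2 * (μ - a) * μ * θ c
          + (μ - a) ^ 2 * θ c := by ring
    simp only [hexpand, sum_add_distrib, sum_sub_distrib, ← mul_sum, hμ, hθ₁]
    ring
  calc ∑ c ∈ univ.filter (fun c => k ≤ X c), θ c
      ≤ (∑ c, θ c * (X c - a) ^ 2) / (k - a) ^ 2 := sum_filter_le_sum_mul_sq_div hθ hak
    _ = v / (v + (k - μ) ^ 2) := by
        have hμa : μ - a = v / (k - μ) := by simp only [a]; ring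
        have hka : k - a = (v + (k - μ) ^ 2) / (k - μ) := by simp only [a]; field_simp; ring
        rw [hshift, hμa, hka]
        have : 0 < v + (k - μ) ^ 2 := by positivity
        field_simp
        ring

end Cantelli

section

variable {n : ℕ}

def chebyshevBound (n : ℕ) (p k : ℝ) : ℝ :=
  n * p * (1 - p) / (n * p * (1 - p) + (k - n * p) ^ 2)

def ones (c : Fin n → Bool) : Finset (Fin n) := univ.filter fun i => c i = true

lemma card_ones_eq_sum (c : Fin n → Bool) :
    (#(ones c) : ℝ) = ∑ i, if c i = true then 1 else 0 := by
  rw [ones, natCast_card_filter]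

lemma card_ones_sq_eq_sum (c : Fin n → Bool) :
    (#(ones c) : ℝ) ^ 2 = ∑ i, ∑ j, if c i = true ∧ c j = true then 1 else 0 := by
  rw [card_ones_eq_sum, sq, sum_mul_sum]
  refine sum_congr rfl fun i _ => sum_congr rfl fun j _ => ?_
  split_ifs <;> simp_all

lemma sum_mul_card_ones_eq_sum_marg (θ : (Fin n → Bool) → ℝ) :
    ∑ c, θ c * #(ones c) = ∑ i, Marg n θ i := by
  simp only [card_ones_eq_sum, mul_sum, Marg, sum_filter]
  rw [sum_comm]
  simp

lemma sum_mul_card_ones_sq_eq_sum_biv (θ : (Fin n → Bool) → ℝ) :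
    ∑ c, θ c * (#(ones c) : ℝ) ^ 2 = ∑ i, ∑ j, Biv n θ i j := by
  simp only [card_ones_sq_eq_sum, mul_sum, Biv, sum_filter]
  rw [sum_comm]
  refine sum_congr rfl fun i _ => ?_
  rw [sum_comm]
  simp

lemma biv_comm (θ : (Fin n → Bool) → ℝ) (i j : Fin n) : Biv n θ i j = Biv n θ j i := by
  simp only [Biv, and_comm]

lemma biv_self (θ : (Fin n → Bool) → ℝ) (i : Fin n) : Biv n θ i i = Marg n θ i := by
  simp [Biv, Marg]

namespace PairwiseIndep

variable {p : ℝ} {θ : (Fin n → Bool) → ℝ}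

lemma biv_eq (h : PairwiseIndep n (fun _ => p) θ) (i j : Fin n) :
    Biv n θ i j = if i = j then p else p ^ 2 := by
  rcases lt_trichotomy i j with hij | rfl | hji
  · rw [if_neg hij.ne, h.2.2 i j hij, sq]
  · rw [if_pos rfl, biv_self, h.2.1]
  · rw [if_neg hji.ne', biv_comm, h.2.2 j i hji, sq]

lemma sum_mul_card_ones (h : PairwiseIndep n (fun _ => p) θ) :
    ∑ c, θ c * #(ones c) = n * p := by
  simp [sum_mul_card_ones_eq_sum_marg, h.2.1]

lemma sum_mul_card_ones_sq (h : PairwiseIndep n (fun _ => p) θ) :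
    ∑ c, θ c * (#(ones c) : ℝ) ^ 2 = n * p + n * (n - 1) * p ^ 2 := by
  have hrow (i : Fin n) : ∑ j, Biv n θ i j = p + (n - 1) * p ^ 2 := by
    have hsplit (j : Fin n) : Biv n θ i j = p ^ 2 + if i = j then p - p ^ 2 else 0 := by
      rw [h.biv_eq]; split_ifs <;> ring
    simp only [hsplit, sum_add_distrib, sum_ite_eq, mem_univ, if_true, sum_const, card_univ,
      Fintype.card_fin, nsmul_eq_mul]
    ring
  simp only [sum_mul_card_ones_sq_eq_sum_biv, hrow, sum_const, card_univ, Fintype.card_fin,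
    nsmul_eq_mul]
  ring

lemma sum_mul_sq_card_ones_sub (h : PairwiseIndep n (fun _ => p) θ) :
    ∑ c, θ c * ((#(ones c) : ℝ) - n * p) ^ 2 = n * p * (1 - p) := by
  have hexpand (c : Fin n → Bool) : θ c * ((#(ones c) : ℝ) - n * p) ^ 2 =
      θ c * (#(ones c) : ℝ) ^ 2 - 2 * (n * p) * (θ c * #(ones c)) + (n * p) ^ 2 * θ c := by
    ring
  simp only [hexpand, sum_add_distrib, sum_sub_distrib, ← mul_sum, h.sum_mul_card_ones,
    h.sum_mul_card_ones_sq, h.1.2]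
  ring

lemma probGE_le_chebyshevBound (h : PairwiseIndep n (fun _ => p) θ) {k : ℕ} (hk : n * p < k) :
    probGE n θ k ≤ chebyshevBound n p k := by
  have hprob : probGE n θ k =
      ∑ c ∈ univ.filter (fun c => (k : ℝ) ≤ #(ones c)), θ c := by
    simp only [probGE, ones, Nat.cast_le]
  rw [hprob, chebyshevBound, ← h.sum_mul_sq_card_ones_sub]
  exact sum_filter_le_cantelli h.1.1 h.1.2 h.sum_mul_card_ones hk

end PairwiseIndep

lemma isGreatest_chebyshevBound {p : ℝ} {k : ℕ} (hk : n * p < k) {θ : (Fin n → Bool) → ℝ}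
    (hθ : PairwiseIndep n (fun _ => p) θ) (hθk : probGE n θ k = chebyshevBound n p k) :
    IsGreatest {x | ∃ θ, PairwiseIndep n (fun _ => p) θ ∧ probGE n θ k = x}
      (chebyshevBound n p k) :=
  ⟨⟨θ, hθ, hθk⟩, by rintro _ ⟨η, hη, rfl⟩; exact hη.probGE_le_chebyshevBound hk⟩

def probAllIn (n : ℕ) (θ : (Fin n → Bool) → ℝ) (s : Finset (Fin n)) : ℝ :=
  ∑ c ∈ univ.filter (fun c : Fin n → Bool => s ⊆ ones c), θ c

def levelUnif (n m : ℕ) (c : Fin n → Bool) : ℝ :=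
  if #(ones c) = m then ((n.choose m : ℕ) : ℝ)⁻¹ else 0

lemma card_filter_card_ones_eq_and_subset (m : ℕ) (s : Finset (Fin n)) :
    #(univ.filter fun c : Fin n → Bool => #(ones c) = m ∧ s ⊆ ones c) =
      #((univ.powersetCard m).filter (s ⊆ ·)) := by
  refine card_nbij' ones (fun t i => decide (i ∈ t)) ?_ ?_ ?_ ?_
  · intro c hc
    simp_all [mem_powersetCard]
  · intro t ht
    have : ones (fun i => decide (i ∈ t)) = t := by ext; simp [ones]
    simp_all [mem_powersetCard]
  · intro c _
    funext i
    simp [ones]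
  · intro t _
    ext; simp [ones]

lemma probAllIn_levelUnif {m : ℕ} (hm : m ≤ n) (s : Finset (Fin n)) :
    probAllIn n (levelUnif n m) s = (m.choose #s : ℝ) / n.choose #s := by
  have hcard : probAllIn n (levelUnif n m) s =
      #((univ.powersetCard m).filter (s ⊆ ·)) * ((n.choose m : ℕ) : ℝ)⁻¹ := by
    simp only [probAllIn, levelUnif]
    rw [← sum_filter, filter_filter, sum_const, nsmul_eq_mul]
    simp_rw [and_comm (a := s ⊆ _)]
    rw [card_filter_card_ones_eq_and_subset]
  rw [hcard]
  rcases le_or_gt #s m with hsm | hms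
  · have hsn : #s ≤ n := (card_le_univ s).trans_eq (Fintype.card_fin n)
    have key := Nat.choose_mul (n := n) hsm
    rw [card_filter_powersetCard_subset s univ m (subset_univ s) hsm, card_univ, Fintype.card_fin]
    have h1 : (n.choose m : ℝ) ≠ 0 := by exact_mod_cast (Nat.choose_pos hm).ne'
    have h2 : (n.choose #s : ℝ) ≠ 0 := by exact_mod_cast (Nat.choose_pos hsn).ne'
    field_simp
    rw [mul_comm]
    exact_mod_cast key.symm
  · rw [Nat.choose_eq_zero_of_lt hms, card_eq_zero.mpr]
    · simp
    · refine filter_false_of_mem fun t ht hst => ?_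
      exact absurd (card_le_card hst) (by rw [(mem_powersetCard.mp ht).2]; omega)

lemma marg_eq_probAllIn (θ : (Fin n → Bool) → ℝ) (i : Fin n) :
    Marg n θ i = probAllIn n θ {i} := by
  simp [Marg, probAllIn, ones]

lemma biv_eq_probAllIn (θ : (Fin n → Bool) → ℝ) (i j : Fin n) :
    Biv n θ i j = probAllIn n θ {i, j} := by
  simp [Biv, probAllIn, ones, insert_subset_iff]

lemma sum_eq_probAllIn_empty (θ : (Fin n → Bool) → ℝ) : ∑ c, θ c = probAllIn n θ ∅ := by
  simp [probAllIn]

lemma levelUnif_nonneg (m : ℕ) (c : Fin n → Bool) : 0 ≤ levelUnif n m c := by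
  unfold levelUnif; split_ifs <;> positivity

lemma sum_levelUnif {m : ℕ} (hm : m ≤ n) : ∑ c, levelUnif n m c = 1 := by
  rw [sum_eq_probAllIn_empty, probAllIn_levelUnif hm]
  simp

lemma marg_levelUnif {m : ℕ} (hm : m ≤ n) (i : Fin n) :
    Marg n (levelUnif n m) i = m / n := by
  rw [marg_eq_probAllIn, probAllIn_levelUnif hm]
  simp

lemma biv_levelUnif {m : ℕ} (hm : m ≤ n) {i j : Fin n} (hij : i ≠ j) :
    Biv n (levelUnif n m) i j = m * (m - 1) / (n * (n - 1)) := by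
  rw [biv_eq_probAllIn, probAllIn_levelUnif hm, card_pair hij, Nat.cast_choose_two,
    Nat.cast_choose_two]
  field_simp

lemma probGE_levelUnif {m : ℕ} (hm : m ≤ n) (k : ℕ) :
    probGE n (levelUnif n m) k = if k ≤ m then 1 else 0 := by
  split_ifs with hkm
  · rw [probGE, sum_filter_of_ne, sum_levelUnif hm]
    intro c _ hc
    unfold levelUnif at hc
    split_ifs at hc with h
    · exact h ▸ hkm
    · exact absurd rfl hc
  · refine sum_eq_zero fun c hc => ?_
    have : m < #(ones c) := by simp only [mem_filter] at hc; unfold ones; omega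
    simp [levelUnif, this.ne']

lemma pairwiseIndep_mix_levelUnif {a b : ℕ} (ha : a ≤ n) (hb : b ≤ n) {t p : ℝ}
    (ht₀ : 0 ≤ t) (ht₁ : t ≤ 1) (hmean : t * a + (1 - t) * b = n * p)
    (hpair : t * (a * (a - 1)) + (1 - t) * (b * (b - 1)) = n * (n - 1) * p ^ 2) :
    PairwiseIndep n (fun _ => p) (t • levelUnif n a + (1 - t) • levelUnif n b) := by
  refine ⟨⟨fun c => ?_, ?_⟩, fun i => ?_, fun i j hij => ?_⟩
  · have := levelUnif_nonneg a c
    have := levelUnif_nonneg b c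
    simp only [Pi.add_apply, Pi.smul_apply, smul_eq_mul]
    nlinarith
  · rw [sum_smul_add_smul, sum_levelUnif ha, sum_levelUnif hb]
    ring
  · have hn : (n : ℝ) ≠ 0 := by have := i.pos; positivity
    rw [Marg, sum_smul_add_smul, ← Marg, ← Marg, marg_levelUnif ha, marg_levelUnif hb]
    field_simp
    linarith
  · have hn : (n : ℝ) * (n - 1) ≠ 0 := by
      have : (2 : ℝ) ≤ n := by exact_mod_cast (show 2 ≤ n by omega)
      nlinarith
    rw [Biv, sum_smul_add_smul, ← Biv, ← Biv, biv_levelUnif ha hij.ne, biv_levelUnif hb hij.ne,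
      mul_div_assoc', mul_div_assoc', ← add_div, div_eq_iff hn]
    linear_combination hpair

lemma chebyshevBound_succ {α : ℕ} {p : ℝ} (hp : p < 1) (hαp : ((n : ℝ) - 1) * p = α) :
    chebyshevBound n p (α + 1) = n * p / (n * p + 1 - p) := by
  have hgap : (α : ℝ) + 1 - n * p = 1 - p := by linear_combination -hαp
  have h1p : 1 - p ≠ 0 := by linarith
  rw [chebyshevBound, hgap, show (n : ℝ) * p * (1 - p) + (1 - p) ^ 2 = (1 - p) * (n * p + 1 - p)
    by ring, mul_comm _ (1 - p), mul_div_mul_left _ _ h1p]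

lemma chebyshevBound_self {p : ℝ} (hn : 0 < n) (hp : p < 1) :
    chebyshevBound n p n = p / (p + n * (1 - p)) := by
  have hc : (n : ℝ) * (1 - p) ≠ 0 :=
    mul_ne_zero (Nat.cast_ne_zero.mpr hn.ne') (sub_ne_zero.mpr hp.ne')
  rw [chebyshevBound, show (n : ℝ) * p * (1 - p) + (n - n * p) ^ 2 =
    n * (1 - p) * (p + n * (1 - p)) by ring, show (n : ℝ) * p * (1 - p) = n * (1 - p) * p by ring,
    mul_div_mul_left _ _ hc]

lemma exists_pairwiseIndep_probGE_succ_eq {α : ℕ} (hα : α + 1 ≤ n) {p : ℝ} (hp₀ : 0 ≤ p)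
    (hp₁ : p < 1) (hαp : ((n : ℝ) - 1) * p = α) :
    ∃ θ, PairwiseIndep n (fun _ => p) θ ∧ probGE n θ (α + 1) = n * p / (n * p + 1 - p) := by
  have hden : (n : ℝ) * p + 1 - p = α + 1 := by linear_combination hαp
  rw [hden]
  have ht₀ : 0 ≤ n * p / (α + 1) := by positivity
  have ht₁ : n * p / (α + 1) ≤ 1 := by rw [div_le_one (by positivity)]; linarith
  refine ⟨(n * p / (α + 1)) • levelUnif n (α + 1) + (1 - n * p / (α + 1)) • levelUnif n 0,
    pairwiseIndep_mix_levelUnif hα (Nat.zero_le n) ht₀ ht₁ ?_ ?_, ?_⟩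
  · push_cast; field_simp; ring
  · push_cast
    field_simp
    linear_combination (-(n * p * (α + 1))) * hαp
  · rw [probGE, sum_smul_add_smul, ← probGE, ← probGE, probGE_levelUnif hα,
      probGE_levelUnif (Nat.zero_le n)]
    simp

lemma exists_pairwiseIndep_probGE_self_eq {α : ℕ} (hα : α < n) {p : ℝ} (hp₀ : 0 ≤ p)
    (hp₁ : p < 1) (hαp : ((n : ℝ) - 1) * p = α) :
    ∃ θ, PairwiseIndep n (fun _ => p) θ ∧ probGE n θ n = p / (p + n * (1 - p)) := by
  have hn : (0 : ℝ) < n := by exact_mod_cast (Nat.zero_le α).trans_lt hα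
  have hden : 0 < p + n * (1 - p) := by nlinarith
  have ht₀ : 0 ≤ p / (p + n * (1 - p)) := by positivity
  have ht₁ : p / (p + n * (1 - p)) ≤ 1 := by rw [div_le_one hden]; nlinarith
  refine ⟨(p / (p + n * (1 - p))) • levelUnif n n + (1 - p / (p + n * (1 - p))) • levelUnif n α,
    pairwiseIndep_mix_levelUnif le_rfl hα.le ht₀ ht₁ ?_ ?_, ?_⟩
  · rw [← hαp]; field_simp; ring
  · rw [← hαp]; field_simp; ring
  · rw [probGE, sum_smul_add_smul, ← probGE, ← probGE, probGE_levelUnif le_rfl,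
      probGE_levelUnif hα.le]
    simp [hα.not_ge]

end

theorem stmt_16_general (n α : ℕ) (hn : 3 ≤ n) (hα2 : α ≤ n - 2)
    (p : ℝ) (hp : p = (α : ℝ) / ((n : ℝ) - 1)) :
    IsGreatest
      {x : ℝ | ∃ θ : (Fin n → Bool) → ℝ,
        PairwiseIndep n (fun _ => p) θ ∧ probGE n θ (α + 1) = x}
      ((n : ℝ) * p / ((n : ℝ) * p + 1 - p)) ∧
    IsGreatest
      {x : ℝ | ∃ θ : (Fin n → Bool) → ℝ,
        PairwiseIndep n (fun _ => p) θ ∧ probGE n θ n = x}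
      (p / (p + (n : ℝ) * (1 - p))) ∧
    (n : ℝ) * p / ((n : ℝ) * p + 1 - p) =
      (n : ℝ) * p * (1 - p) /
        ((n : ℝ) * p * (1 - p) + (((α : ℝ) + 1) - (n : ℝ) * p) ^ 2) ∧
    p / (p + (n : ℝ) * (1 - p)) =
      (n : ℝ) * p * (1 - p) /
        ((n : ℝ) * p * (1 - p) + ((n : ℝ) - (n : ℝ) * p) ^ 2) := by
  have hαn : α + 2 ≤ n := by omega
  have hn₁ : (0 : ℝ) < n - 1 := by
    have : (3 : ℝ) ≤ n := by exact_mod_cast hn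
    linarith
  have hαp : ((n : ℝ) - 1) * p = α := by rw [hp]; field_simp
  have hp₀ : 0 ≤ p := by rw [hp]; positivity
  have hp₁ : p < 1 := by
    rw [hp, div_lt_one hn₁, lt_sub_iff_add_lt]
    exact_mod_cast hαn
  have hsucc := chebyshevBound_succ hp₁ hαp
  have hself := chebyshevBound_self (n := n) (by omega) hp₁
  obtain ⟨θ₁, hθ₁, hprob₁⟩ := exists_pairwiseIndep_probGE_succ_eq (by omega) hp₀ hp₁ hαp
  obtain ⟨θ₂, hθ₂, hprob₂⟩ := exists_pairwiseIndep_probGE_self_eq (by omega) hp₀ hp₁ hαp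
  refine ⟨?_, ?_, hsucc.symm, hself.symm⟩
  · have hk : n * p < ((α + 1 : ℕ) : ℝ) := by push_cast; linarith
    rw [← hsucc, ← Nat.cast_succ]
    exact isGreatest_chebyshevBound hk hθ₁ (by rw [hprob₁, Nat.cast_succ, hsucc])
  · have hk : n * p < n := by nlinarith
    rw [← hself]
    exact isGreatest_chebyshevBound hk hθ₂ (hprob₂.trans hself.symm)

theorem stmt_16 (n α : ℕ) (hn : 3 ≤ n) (hα1 : 1 ≤ α) (hα2 : α ≤ n - 2)
    (p : ℝ) (hp : p = (α : ℝ) / ((n : ℝ) - 1)) :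
    IsGreatest
      {x : ℝ | ∃ θ : (Fin n → Bool) → ℝ,
        PairwiseIndep n (fun _ => p) θ ∧ probGE n θ (α + 1) = x}
      ((n : ℝ) * p / ((n : ℝ) * p + 1 - p)) ∧
    IsGreatest
      {x : ℝ | ∃ θ : (Fin n → Bool) → ℝ,
        PairwiseIndep n (fun _ => p) θ ∧ probGE n θ n = x}
      (p / (p + (n : ℝ) * (1 - p))) ∧
    (n : ℝ) * p / ((n : ℝ) * p + 1 - p) =
      (n : ℝ) * p * (1 - p) /
        ((n : ℝ) * p * (1 - p) + (((α : ℝ) + 1) - (n : ℝ) * p) ^ 2) ∧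
    p / (p + (n : ℝ) * (1 - p)) =
      (n : ℝ) * p * (1 - p) /
        ((n : ℝ) * p * (1 - p) + ((n : ℝ) - (n : ℝ) * p) ^ 2) :=
  stmt_16_general n α hn hα2 p hp
end
end
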